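/- arXiv:2510.00864 — 3 statements merged into one kernel-verified Lean document; each statement's English description precedes it below -/
import Mathlib

section
/- (Filtration Lemma) Let Φ be a set of pairs (m,n) with n > m > 1 and let φ be a modal formula. If φ is satisfied at the root r of a model (W,R,V) rooted at r which satisfies condition (1): ∀x,y (x R y → ∃y' (x R y' ∧ d_r(y') = d_r(x)+1 ∧ y' ∼ y)), and condition (2): for each (m,n) ∈ Φ, ∀x,z (x R^m z → ∃ w_1,…,w_{n−1} with x R w_1 R ⋯ R w_{n−1} R z and d_r(w_j) = d_r(x)+j for each j), then φ is satisfiable in a model whose frame is a finite Φ-frame. -/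
/-- Modal formulas: ⊥, propositional variables, ¬, ∨, ◇. -/
inductive ModalFormula : Type
  | bot : ModalFormula
  | var : ℕ → ModalFormula
  | neg : ModalFormula → ModalFormula
  | or : ModalFormula → ModalFormula → ModalFormula
  | dia : ModalFormula → ModalFormula

namespace ModalFormula

/-- Modal depth: maximal nesting of ◇. -/
def md : ModalFormula → ℕ
  | bot => 0
  | var _ => 0
  | neg φ => md φ
  | or φ ψ => max (md φ) (md ψ)
  | dia φ => md φ + 1

/-- The set of propositional variables occurring in a formula. -/
def vars : ModalFormula → Set ℕ
  | bot => ∅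
  | var p => {p}
  | neg φ => vars φ
  | or φ ψ => vars φ ∪ vars ψ
  | dia φ => vars φ

/-- The set of subformulas of a formula (including the formula itself). -/
def subformulas : ModalFormula → Set ModalFormula
  | bot => {bot}
  | var p => {var p}
  | neg φ => insert (neg φ) (subformulas φ)
  | or φ ψ => insert (or φ ψ) (subformulas φ ∪ subformulas ψ)
  | dia φ => insert (dia φ) (subformulas φ)

end ModalFormula

/-- Standard Kripke satisfaction for a model given by a relation `R` and a valuation `V`. -/
def Sat {W : Type*} (R : W → W → Prop) (V : ℕ → Set W) : W → ModalFormula → Prop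
  | _, .bot => False
  | w, .var p => w ∈ V p
  | w, .neg φ => ¬ Sat R V w φ
  | w, .or φ ψ => Sat R V w φ ∨ Sat R V w ψ
  | w, .dia φ => ∃ v, R w v ∧ Sat R V v φ

/-- The `k`-step relation: `relPow R 0` is the identity, `relPow R (k+1) = relPow R k ∘ R`. -/
def relPow {W : Type*} (R : W → W → Prop) : ℕ → W → W → Prop
  | 0, x, y => x = y
  | k + 1, x, y => ∃ u, relPow R k x u ∧ R u y

/-- A frame is a `Φ`-frame if for every `(m,n) ∈ Φ`, `x R^m y` implies `x R^n y`. -/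
def PhiFrame {W : Type*} (R : W → W → Prop) (Φ : Set (ℕ × ℕ)) : Prop :=
  ∀ mn ∈ Φ, ∀ x y : W, relPow R mn.1 x y → relPow R mn.2 x y

/-- A pointed frame is rooted at `r` if every world is reachable from `r` in some number of steps. -/
def Rooted {W : Type*} (R : W → W → Prop) (r : W) : Prop :=
  ∀ w : W, ∃ k, relPow R k r w

/-- The depth of `w` w.r.t. `r`: the least `k` with `r R^k w`. -/
noncomputable def depth {W : Type*} (R : W → W → Prop) (r w : W) : ℕ :=
  sInf {k | relPow R k r w}

/-- `f` is a pointed p-morphism from `(W',R',r')` to `(W,R,r)`. -/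
def IsPMorphism {W' W : Type*} (R' : W' → W' → Prop) (r' : W')
    (R : W → W → Prop) (r : W) (f : W' → W) : Prop :=
  f r' = r ∧ (∀ x y, R' x y → R (f x) (f y)) ∧
    (∀ x y', R (f x) y' → ∃ y, R' x y ∧ f y = y')

/-- Bisimilarity of `x` (in model `(R,V)`) and `x'` (in model `(R',V')`). -/
def Bisim {W W' : Type*} (R : W → W → Prop) (V : ℕ → Set W)
    (R' : W' → W' → Prop) (V' : ℕ → Set W') (x : W) (x' : W') : Prop :=
  ∃ Z : W → W' → Prop, Z x x' ∧ ∀ w w', Z w w' →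
    (∀ p, w ∈ V p ↔ w' ∈ V' p) ∧
    (∀ v, R w v → ∃ v', R' w' v' ∧ Z v v') ∧
    (∀ v', R' w' v' → ∃ v, R w v ∧ Z v v')

/-- `k`-bisimilarity w.r.t. the set `X` of propositional variables. -/
def kBisim {W W' : Type*} (R : W → W → Prop) (V : ℕ → Set W)
    (R' : W' → W' → Prop) (V' : ℕ → Set W') (X : Set ℕ) :
    ℕ → W → W' → Prop
  | 0, w, w' => ∀ p ∈ X, (w ∈ V p ↔ w' ∈ V' p)
  | k + 1, w, w' => (∀ p ∈ X, (w ∈ V p ↔ w' ∈ V' p)) ∧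
      (∀ v, R w v → ∃ v', R' w' v' ∧ kBisim R V R' V' X k v v') ∧
      (∀ v', R' w' v' → ∃ v, R w v ∧ kBisim R V R' V' X k v v')

/-- `DepthPath R dep n x z` says there is an `n`-step `R`-path
`x R w₁ R ⋯ R w_{n-1} R z` whose intermediate points satisfy `dep (w_j) = dep x + j`. -/
def DepthPath {W : Type*} (R : W → W → Prop) (dep : W → ℕ) (n : ℕ) (x z : W) : Prop :=
  ∃ w : ℕ → W, w 0 = x ∧ w n = z ∧ (∀ j < n, R (w j) (w (j + 1))) ∧
    ∀ j, 0 < j → j < n → dep (w j) = dep x + j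

/-!
Condition (2) makes `(W, R)` a Φ-frame, and the finite model is built from types of bounded
modal depth over the variables of `φ`. Its points are pairs `(ℓ, τ)` with `ℓ ≤ md φ` and `τ` a
depth-`ℓ` type; `(ℓ, τ)` sees `(ℓ', τ')` if `ℓ = 0`, or if `ℓ' ≥ ℓ - 1` and some world of type `τ`
has a successor whose depth-`(ℓ - 1)` type is that of a world of type `τ'`. A point `(ℓ, τ)`
satisfies exactly the formulas of depth `≤ ℓ` true at worlds of type `τ`; level-`0` points carry
no modal information, so letting them see everything costs nothing.

For the Φ-frame property, an `m`-path from a point of level `ℓ > 0` lifts to an `R`-path of length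
`min m ℓ`, losing one level of type information per step. If `m ≤ ℓ`, the Φ-frame property of
`W` turns it into an `n`-path, which projects back with levels decreasing by one; otherwise the
lifted path reaches level `0`, from where there are paths of every length to every point.
-/

theorem ModalFormula.vars_finite (φ : ModalFormula) : φ.vars.Finite := by
  induction φ with
  | bot => exact Set.finite_empty
  | var p => exact Set.finite_singleton p
  | neg φ ih => exact ih
  | or φ ψ ihφ ihψ => exact ihφ.union ihψ
  | dia φ ih => exact ih

section relPow

variable {α : Type*} {R : α → α → Prop}

theorem relPow_add {a b : ℕ} {x z : α} :
    relPow R (a + b) x z ↔ ∃ y, relPow R a x y ∧ relPow R b y z := by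
  induction b generalizing z with
  | zero => simp [relPow]
  | succ b ih =>
    show (∃ u, relPow R (a + b) x u ∧ R u z) ↔ ∃ y, relPow R a x y ∧ ∃ u, relPow R b y u ∧ R u z
    simp only [ih]
    constructor
    · rintro ⟨u, ⟨y, hxy, hyu⟩, huz⟩
      exact ⟨y, hxy, u, hyu, huz⟩
    · rintro ⟨y, hxy, u, hyu, huz⟩
      exact ⟨u, ⟨y, hxy, hyu⟩, huz⟩

theorem relPow_one {x y : α} : relPow R 1 x y ↔ R x y := by
  simp [relPow]

theorem relPow_succ_of_forall_rel {x : α} (hx : ∀ y, R x y) (k : ℕ) (z : α) :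
    relPow R (k + 1) x z := by
  induction k generalizing z with
  | zero => exact ⟨x, rfl, hx z⟩
  | succ k ih => exact ⟨x, ih x, hx z⟩

theorem exists_rel_of_relPow {m : ℕ} (hm : 0 < m) {x z : α} (h : relPow R m x z) :
    ∃ y, R x y := by
  induction m generalizing z with
  | zero => omega
  | succ k ih =>
    obtain ⟨u, hxu, huz⟩ := h
    rcases k with _ | k
    · exact ⟨z, hxu ▸ huz⟩
    · exact ih k.succ_pos hxu

theorem exists_relPow_of_le {m k : ℕ} (hkm : k ≤ m) {x z : α} (h : relPow R m x z) :
    ∃ y, relPow R k x y := by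
  rw [← Nat.add_sub_cancel' hkm] at h
  obtain ⟨y, hxy, -⟩ := relPow_add.1 h
  exact ⟨y, hxy⟩

theorem relPow_of_chain (w : ℕ → α) {n : ℕ} (hw : ∀ j < n, R (w j) (w (j + 1))) :
    relPow R n (w 0) (w n) := by
  induction n with
  | zero => rfl
  | succ n ih => exact ⟨w n, ih fun j hj => hw j (by omega), hw n (by omega)⟩

theorem DepthPath.relPow {dep : α → ℕ} {n : ℕ} {x z : α} (h : DepthPath R dep n x z) :
    relPow R n x z := by
  obtain ⟨w, rfl, rfl, hw, -⟩ := h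
  exact relPow_of_chain w hw

end relPow

def LevelType (X : Set ℕ) : ℕ → Type
  | 0 => Set X
  | k + 1 => Set X × Set (LevelType X k)

instance LevelType.finite (X : Set ℕ) [Finite X] : ∀ k, Finite (LevelType X k)
  | 0 => inferInstanceAs (Finite (Set X))
  | k + 1 => haveI := LevelType.finite X k; inferInstanceAs (Finite (Set X × Set _))

def LevelType.atoms {X : Set ℕ} : {k : ℕ} → LevelType X k → Set X
  | 0, τ => τ
  | _ + 1, τ => τ.1

section LevelType

variable {W : Type*} (R : W → W → Prop) (V : ℕ → Set W) (X : Set ℕ)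

def levelType : (k : ℕ) → W → LevelType X k
  | 0, w => {p | w ∈ V p}
  | k + 1, w => ({p | w ∈ V p}, levelType k '' {v | R w v})

variable {R V X}

@[simp]
theorem atoms_levelType (k : ℕ) (w : W) :
    (levelType R V X k w).atoms = {p : X | w ∈ V p} := by
  cases k <;> rfl

theorem exists_rel_levelType_eq {k : ℕ} {a b y : W}
    (h : levelType R V X (k + 1) a = levelType R V X (k + 1) b) (hay : R a y) :
    ∃ u, R b u ∧ levelType R V X k u = levelType R V X k y := by
  have hy : levelType R V X k y ∈ (levelType R V X (k + 1) b).2 := h ▸ ⟨y, hay, rfl⟩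
  exact hy

theorem levelType_eq_of_succ {k : ℕ} {a b : W}
    (h : levelType R V X (k + 1) a = levelType R V X (k + 1) b) :
    levelType R V X k a = levelType R V X k b := by
  induction k generalizing a b with
  | zero => exact congrArg Prod.fst h
  | succ k ih =>
    have hsub : ∀ {a b : W}, levelType R V X (k + 2) a = levelType R V X (k + 2) b →
        levelType R V X k '' {v | R a v} ⊆ levelType R V X k '' {v | R b v} := by
      rintro a b hab _ ⟨y, hay, rfl⟩
      obtain ⟨u, hbu, hu⟩ := exists_rel_levelType_eq hab hay
      exact ⟨u, hbu, ih hu⟩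
    have hatoms := congrArg Prod.fst h
    exact Prod.ext hatoms ((hsub h).antisymm (hsub h.symm))

theorem levelType_eq_of_le {j k : ℕ} (hjk : j ≤ k) {a b : W}
    (h : levelType R V X k a = levelType R V X k b) :
    levelType R V X j a = levelType R V X j b := by
  induction k, hjk using Nat.le_induction with
  | base => exact h
  | succ k _ ih => exact ih (levelType_eq_of_succ h)

theorem sat_iff_of_levelType_eq {ψ : ModalFormula} (hψ : ψ.vars ⊆ X) {k : ℕ} (hk : ψ.md ≤ k)
    {a b : W} (h : levelType R V X k a = levelType R V X k b) :
    Sat R V a ψ ↔ Sat R V b ψ := by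
  induction ψ generalizing k a b with
  | bot => rfl
  | var p =>
    have hp : (⟨p, hψ rfl⟩ : X) ∈ (levelType R V X k a).atoms ↔
        (⟨p, hψ rfl⟩ : X) ∈ (levelType R V X k b).atoms := by rw [h]
    show a ∈ V p ↔ b ∈ V p
    simpa using hp
  | neg ψ ih => exact not_congr (ih hψ hk h)
  | or ψ χ ihψ ihχ =>
    exact or_congr (ihψ (Set.subset_union_left.trans hψ) (le_of_max_le_left hk) h)
      (ihχ (Set.subset_union_right.trans hψ) (le_of_max_le_right hk) h)
  | dia ψ ih =>
    cases k with
    | zero => exact absurd hk (Nat.not_succ_le_zero _)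
    | succ k =>
      have hk' : ψ.md ≤ k := Nat.le_of_succ_le_succ hk
      have transfer : ∀ {a b : W}, levelType R V X (k + 1) a = levelType R V X (k + 1) b →
          Sat R V a ψ.dia → Sat R V b ψ.dia := by
        rintro a b hab ⟨y, hay, hy⟩
        obtain ⟨u, hbu, hu⟩ := exists_rel_levelType_eq hab hay
        exact ⟨u, hbu, (ih hψ hk' hu).2 hy⟩
      exact ⟨transfer h, transfer h.symm⟩

end LevelType

section TypeModel

variable {W : Type*} (R : W → W → Prop) (V : ℕ → Set W) (X : Set ℕ) (N : ℕ)

def TypeNode : Type := Σ ℓ : Fin (N + 1), LevelType X ℓ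

instance [Finite X] : Finite (TypeNode X N) :=
  inferInstanceAs (Finite (Σ ℓ : Fin (N + 1), LevelType X ℓ))

variable {N}

def typeNode (ℓ : Fin (N + 1)) (w : W) : TypeNode X N := ⟨ℓ, levelType R V X ℓ w⟩

def NodeMatches (j : ℕ) (u : W) (B : TypeNode X N) : Prop :=
  j ≤ B.1 ∧ ∃ w, levelType R V X B.1 w = B.2 ∧ levelType R V X j w = levelType R V X j u

def typeRel (A B : TypeNode X N) : Prop :=
  (A.1 : ℕ) = 0 ∨
    ∃ x y, R x y ∧ levelType R V X A.1 x = A.2 ∧ NodeMatches R V X (A.1 - 1) y B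

def typeVal (p : ℕ) : Set (TypeNode X N) := {A | ∃ hp : p ∈ X, ⟨p, hp⟩ ∈ A.2.atoms}

variable {R V X}

theorem typeNode_eq {B : TypeNode X N} {w : W} (hw : levelType R V X B.1 w = B.2) :
    typeNode R V X B.1 w = B := by
  obtain ⟨ℓ, τ⟩ := B
  dsimp only at hw
  subst hw
  rfl

theorem NodeMatches.mono {i j : ℕ} (hij : i ≤ j) {u : W} {B : TypeNode X N}
    (h : NodeMatches R V X j u B) : NodeMatches R V X i u B := by
  obtain ⟨hj, w, hw, hwu⟩ := h
  exact ⟨hij.trans hj, w, hw, levelType_eq_of_le hij hwu⟩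

theorem nodeMatches_typeNode {j : ℕ} {ℓ : Fin (N + 1)} (hj : j ≤ ℓ) (u : W) :
    NodeMatches R V X j u (typeNode R V X ℓ u) :=
  ⟨hj, u, rfl, rfl⟩

theorem typeRel_typeNode {ℓ : Fin (N + 1)} {y u : W} (hyu : R y u) {C : TypeNode X N}
    (hC : NodeMatches R V X (ℓ - 1) u C) : typeRel R V X (typeNode R V X ℓ y) C :=
  Or.inr ⟨y, u, hyu, rfl, hC⟩

theorem NodeMatches.exists_rel {j : ℕ} {u : W} {B C : TypeNode X N}
    (hB : NodeMatches R V X (j + 1) u B) (hBC : typeRel R V X B C) :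
    ∃ v, R u v ∧ NodeMatches R V X j v C := by
  obtain ⟨hjB, w, hw, hwu⟩ := hB
  obtain hB0 | ⟨x, y, hxy, hx, hCj, w', hw', hw'y⟩ := hBC
  · omega
  have hxu : levelType R V X (j + 1) x = levelType R V X (j + 1) u :=
    (levelType_eq_of_le hjB (hx.trans hw.symm)).trans hwu
  obtain ⟨v, huv, hvy⟩ := exists_rel_levelType_eq hxu hxy
  refine ⟨v, huv, by omega, w', hw', ?_⟩
  exact (levelType_eq_of_le (by omega) hw'y).trans hvy.symm

theorem NodeMatches.exists_relPow {j k : ℕ} (hkj : k ≤ j) {x : W} {A B : TypeNode X N}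
    (hA : NodeMatches R V X j x A) (hAB : relPow (typeRel R V X) k A B) :
    ∃ u, relPow R k x u ∧ NodeMatches R V X (j - k) u B := by
  induction k generalizing B with
  | zero => exact ⟨x, rfl, hAB ▸ hA⟩
  | succ k ih =>
    obtain ⟨B', hAB', hB'B⟩ := hAB
    obtain ⟨u, hxu, hu⟩ := ih (by omega) hAB'
    rw [show j - k = j - (k + 1) + 1 by omega] at hu
    obtain ⟨v, huv, hv⟩ := hu.exists_rel hB'B
    exact ⟨v, ⟨u, hxu, huv⟩, hv⟩

theorem relPow_typeRel_typeNode {ℓ : Fin (N + 1)} {k : ℕ} {x u : W} (hxu : relPow R (k + 1) x u)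
    {C : TypeNode X N} (hC : NodeMatches R V X (ℓ - (k + 1)) u C) :
    relPow (typeRel R V X) (k + 1) (typeNode R V X ℓ x) C := by
  induction k generalizing u C with
  | zero =>
    obtain ⟨y, rfl, hyu⟩ := hxu
    exact relPow_one.2 (typeRel_typeNode hyu hC)
  | succ k ih =>
    obtain ⟨y, hxy, hyu⟩ := hxu
    let ℓy : Fin (N + 1) := ⟨ℓ - (k + 1), by omega⟩
    refine ⟨typeNode R V X ℓy y, ih hxy (nodeMatches_typeNode (ℓ := ℓy) le_rfl y), ?_⟩
    exact typeRel_typeNode hyu (by simpa [ℓy, Nat.sub_sub] using hC)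

theorem sat_typeNode_iff {ψ : ModalFormula} (hψ : ψ.vars ⊆ X) {ℓ : Fin (N + 1)} (hℓ : ψ.md ≤ ℓ)
    (w : W) : Sat (typeRel R V X) (typeVal X) (typeNode R V X ℓ w) ψ ↔ Sat R V w ψ := by
  induction ψ generalizing ℓ w with
  | bot => rfl
  | var p =>
    show (∃ hp : p ∈ X, _) ↔ w ∈ V p
    simp only [typeNode, atoms_levelType, Set.mem_ofPred_eq, exists_prop, and_iff_right (hψ rfl)]
  | neg ψ ih => exact not_congr (ih hψ hℓ w)
  | or ψ χ ihψ ihχ =>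
    exact or_congr (ihψ (Set.subset_union_left.trans hψ) (le_of_max_le_left hℓ) w)
      (ihχ (Set.subset_union_right.trans hψ) (le_of_max_le_right hℓ) w)
  | dia ψ ih =>
    obtain ⟨_ | k, hk⟩ := ℓ
    · exact absurd hℓ (Nat.not_succ_le_zero _)
    have hψX : ψ.vars ⊆ X := hψ
    have hψk : ψ.md ≤ k := Nat.le_of_succ_le_succ hℓ
    constructor
    · rintro ⟨B, hwB | ⟨x, y, hxy, hx, hkB, w', hw', hw'y⟩, hB⟩
      · exact absurd hwB k.succ_ne_zero
      rw [← typeNode_eq hw', ih hψX (hψk.trans hkB)] at hB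
      have hy : Sat R V y ψ := (sat_iff_of_levelType_eq hψX hψk hw'y).1 hB
      exact (sat_iff_of_levelType_eq hψ hℓ hx).1 ⟨y, hxy, hy⟩
    · rintro ⟨y, hwy, hy⟩
      let ℓy : Fin (N + 1) := ⟨k, by omega⟩
      exact ⟨typeNode R V X ℓy y,
        typeRel_typeNode hwy (nodeMatches_typeNode (ℓ := ℓy) le_rfl y), (ih hψX hψk y).2 hy⟩

theorem relPow_typeRel_imp_of_relPow_imp {m n : ℕ} (hm : 0 < m) (hmn : m ≤ n)
    (hR : ∀ x z, relPow R m x z → relPow R n x z) (A C : TypeNode X N)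
    (hAC : relPow (typeRel R V X) m A C) : relPow (typeRel R V X) n A C := by
  obtain ⟨n, rfl⟩ : ∃ n', n = n' + 1 := ⟨n - 1, by omega⟩
  by_cases hA0 : (A.1 : ℕ) = 0
  · exact relPow_succ_of_forall_rel (R := typeRel R V X) (fun _ => Or.inl hA0) n C
  obtain ⟨B, hA0' | ⟨x, -, -, hx, -⟩⟩ := exists_rel_of_relPow hm hAC
  · contradiction
  rw [← typeNode_eq hx] at hAC ⊢
  have hxA : NodeMatches R V X A.1 x (typeNode R V X A.1 x) := nodeMatches_typeNode le_rfl x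
  by_cases hmA : m ≤ A.1
  · obtain ⟨u, hxu, hu⟩ := hxA.exists_relPow hmA hAC
    exact relPow_typeRel_typeNode (hR x u hxu) (hu.mono (by omega))
  obtain ⟨B, hAB⟩ := exists_relPow_of_le (le_of_not_ge hmA) hAC
  obtain ⟨u, hxu, -⟩ := hxA.exists_relPow le_rfl hAB
  obtain ⟨ℓ, hℓ⟩ : ∃ ℓ, (A.1 : ℕ) = ℓ + 1 := ⟨A.1 - 1, by omega⟩
  rw [hℓ] at hxu
  let bottom : TypeNode X N := typeNode R V X ⟨0, by omega⟩ u
  have hdive : relPow (typeRel R V X) (ℓ + 1) (typeNode R V X A.1 x) bottom :=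
    relPow_typeRel_typeNode hxu (nodeMatches_typeNode (by omega) u)
  rw [show n + 1 = (ℓ + 1) + (n - (ℓ + 1) + 1) by omega]
  exact relPow_add.2
    ⟨bottom, hdive, relPow_succ_of_forall_rel (R := typeRel R V X) (fun _ => Or.inl rfl) _ C⟩

end TypeModel

theorem statement2_general (Φ : Set (ℕ × ℕ)) (hΦ : ∀ mn ∈ Φ, 1 < mn.1 ∧ mn.1 < mn.2)
    (φ : ModalFormula) {W : Type*} (R : W → W → Prop) (V : ℕ → Set W) (r : W)
    (hSat : Sat R V r φ)
    (h2 : ∀ mn ∈ Φ, ∀ x z, relPow R mn.1 x z → DepthPath R (depth R r) mn.2 x z) :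
    ∃ (W' : Type) (R' : W' → W' → Prop) (V' : ℕ → Set W') (w' : W'),
      Finite W' ∧ PhiFrame R' Φ ∧ Sat R' V' w' φ := by
  have := φ.vars_finite.to_subtype
  refine ⟨TypeNode φ.vars φ.md, typeRel R V φ.vars, typeVal φ.vars,
    typeNode R V φ.vars (Fin.last _) r, inferInstance, ?_,
    (sat_typeNode_iff subset_rfl le_rfl r).2 hSat⟩
  intro mn hmn
  obtain ⟨hm, hmn'⟩ := hΦ mn hmn
  exact relPow_typeRel_imp_of_relPow_imp (by omega) hmn'.le fun x z hxz =>
    (h2 mn hmn x z hxz).relPow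

/-- Filtration Lemma: if `φ` holds at the root of a rooted model satisfying conditions (1)
and (2), then `φ` is satisfiable in a finite `Φ`-frame model. -/
theorem statement2 (Φ : Set (ℕ × ℕ)) (hΦ : ∀ mn ∈ Φ, 1 < mn.1 ∧ mn.1 < mn.2)
    (φ : ModalFormula) {W : Type*} (R : W → W → Prop) (V : ℕ → Set W) (r : W)
    (hRoot : Rooted R r) (hSat : Sat R V r φ)
    (h1 : ∀ x y, R x y → ∃ y', R x y' ∧ depth R r y' = depth R r x + 1 ∧ Bisim R V R V y' y)
    (h2 : ∀ mn ∈ Φ, ∀ x z, relPow R mn.1 x z → DepthPath R (depth R r) mn.2 x z) :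
    ∃ (W' : Type) (R' : W' → W' → Prop) (V' : ℕ → Set W') (w' : W'),
      Finite W' ∧ PhiFrame R' Φ ∧ Sat R' V' w' φ :=
  statement2_general Φ hΦ φ R V r hSat h2
end

section
/- Let Φ be a countable set of pairs (m,n) with n > m > 1 and let (W,R,r) be a Φ-frame rooted at r with W countable. Then there exist a pointed frame (W',R',r') rooted at r' and a pointed p-morphism f : (W',R',r') → (W,R,r) such that: (i) ∀x,y (x R' y → ∃y' (x R' y' ∧ d_{r'}(y') = d_{r'}(x)+1 ∧ f(y') = f(y))); and (ii) for each (m,n) ∈ Φ, ∀x,z (x R'^m z → ∃ w_1,…,w_{n−1} ∈ W' with x R' w_1 R' ⋯ R' w_{n−1} R' z and d_{r'}(w_j) = d_{r'}(x)+j for each j). -/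
/-
Unravel the frame by depth: a new world is a pair `(k, w)` with `r R^k w`, and `(k, w)` sees
`(l, v)` when `w R v` and `l ≤ k + 1`. Layers grow by at most one per step and every `(k, w)` is
reached from `(0, r)` along a path climbing one layer per step, so the depth of `(k, w)` is `k`;
`(k, w) ↦ w` is a p-morphism. For (ii), project an `m`-step path down, replace it by an `n`-step
path using the Φ-frame condition, and lift it back climbing one layer per step: since `m < n`,
its last step may go down to the layer of the original endpoint.
-/

section RelPow

variable {W W' : Type*} {R : W → W → Prop}

lemma relPow_add_s6 {k j : ℕ} {x y z : W} (hxy : relPow R k x y) (hyz : relPow R j y z) :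
    relPow R (k + j) x z := by
  induction j generalizing z with
  | zero => exact (show y = z from hyz) ▸ hxy
  | succ j ih =>
    obtain ⟨u, hyu, huz⟩ := hyz
    exact ⟨u, ih hyu, huz⟩

lemma relPow_of_path (u : ℕ → W) (k : ℕ) (hu : ∀ i < k, R (u i) (u (i + 1))) :
    relPow R k (u 0) (u k) := by
  induction k with
  | zero => rfl
  | succ k ih => exact ⟨u k, ih fun i hi => hu i (by omega), hu k (by omega)⟩

lemma exists_path_of_relPow {k : ℕ} {x y : W} (h : relPow R k x y) :
    ∃ u : ℕ → W, u 0 = x ∧ u k = y ∧ ∀ i < k, R (u i) (u (i + 1)) := by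
  induction k generalizing y with
  | zero => exact ⟨fun _ => x, rfl, h, fun i hi => absurd hi (Nat.not_lt_zero i)⟩
  | succ k ih =>
    obtain ⟨v, hxv, hvy⟩ := h
    obtain ⟨u, hu0, huk, hu⟩ := ih hxv
    refine ⟨fun i => if i ≤ k then u i else y, by simpa using hu0, by simp, fun i hi => ?_⟩
    rcases Nat.lt_or_ge i k with hik | hik
    · simpa [hik.le, Nat.succ_le_of_lt hik] using hu i hik
    · obtain rfl : i = k := by omega
      simpa [huk] using hvy

lemma relPow_map {R' : W' → W' → Prop} {f : W' → W} (hf : ∀ a b, R' a b → R (f a) (f b))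
    {k : ℕ} {x y : W'} (h : relPow R' k x y) : relPow R k (f x) (f y) := by
  induction k generalizing y with
  | zero => exact congrArg f h
  | succ k ih =>
    obtain ⟨u, hxu, huy⟩ := h
    exact ⟨f u, ih hxu, hf u y huy⟩

lemma le_add_of_relPow {d : W → ℕ} (hd : ∀ a b, R a b → d b ≤ d a + 1) {k : ℕ} {x y : W}
    (h : relPow R k x y) : d y ≤ d x + k := by
  induction k generalizing y with
  | zero => exact (show x = y from h) ▸ Nat.le_add_right _ _
  | succ k ih =>
    obtain ⟨u, hxu, huy⟩ := h
    have := ih hxu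
    have := hd u y huy
    omega

lemma depth_eq_of_relPow {r w : W} {k : ℕ} (h : relPow R k r w)
    (hmin : ∀ j, relPow R j r w → k ≤ j) : depth R r w = k :=
  le_antisymm (Nat.sInf_le h) (le_csInf ⟨k, h⟩ hmin)

end RelPow

/-- Worlds of the depth unravelling of `(W, R, r)`; they are stored in a copy `V ≃ W` so that the
unravelling of a countable frame can be taken in `Type`. -/
@[ext]
structure LayeredWorld {V W : Type*} (e : V ≃ W) (R : W → W → Prop) (r : W) where
  layer : ℕ
  point : V
  reach : relPow R layer r (e point)

namespace LayeredWorld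

variable {V W : Type*} {e : V ≃ W} {R : W → W → Prop} {r : W}

variable (e R r) in
def root : LayeredWorld e R r := ⟨0, e.symm r, (e.apply_symm_apply r).symm⟩

def proj (a : LayeredWorld e R r) : W := e a.point

def Edge (a b : LayeredWorld e R r) : Prop := R a.proj b.proj ∧ b.layer ≤ a.layer + 1

def succ (a : LayeredWorld e R r) (w : W) (h : R a.proj w) : LayeredWorld e R r :=
  ⟨a.layer + 1, e.symm w, ⟨e a.point, a.reach, by simpa [proj] using h⟩⟩

@[simp] lemma proj_root : (root e R r).proj = r := e.apply_symm_apply r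

@[simp] lemma proj_succ (a : LayeredWorld e R r) (w : W) (h : R a.proj w) :
    (a.succ w h).proj = w := e.apply_symm_apply w

@[simp] lemma layer_succ (a : LayeredWorld e R r) (w : W) (h : R a.proj w) :
    (a.succ w h).layer = a.layer + 1 := rfl

lemma edge_succ (a : LayeredWorld e R r) (w : W) (h : R a.proj w) : Edge a (a.succ w h) :=
  ⟨by simpa using h, le_rfl⟩

lemma relPow_root_layer (a : LayeredWorld e R r) : relPow Edge a.layer (root e R r) a := by
  obtain ⟨k, p, hp⟩ := a
  induction k generalizing p with
  | zero => exact LayeredWorld.ext rfl (e.symm_apply_eq.mpr hp)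
  | succ k ih =>
    obtain ⟨v, hv, hvp⟩ := hp
    let b : LayeredWorld e R r := ⟨k, e.symm v, by simpa using hv⟩
    exact ⟨b, ih _ _, by simpa [Edge, proj, b] using hvp⟩

lemma depth_eq_layer (a : LayeredWorld e R r) : depth Edge (root e R r) a = a.layer :=
  depth_eq_of_relPow a.relPow_root_layer fun _ h => by
    simpa [root] using le_add_of_relPow (d := layer) (fun _ _ hab => hab.2) h

lemma rooted : Rooted Edge (root e R r) := fun a => ⟨a.layer, a.relPow_root_layer⟩

lemma isPMorphism : IsPMorphism Edge (root e R r) R r proj :=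
  ⟨proj_root, fun _ _ h => h.1, fun a w h => ⟨a.succ w h, a.edge_succ w h, proj_succ a w h⟩⟩

lemma depthPath_layer {n : ℕ} (hn : 0 < n) {x z : LayeredWorld e R r}
    (h : relPow R n x.proj z.proj) (hz : z.layer ≤ x.layer + n) :
    DepthPath Edge layer n x z := by
  obtain ⟨u, hu0, hun, hu⟩ := exists_path_of_relPow h
  have reach (j : ℕ) (hj : j ≤ n) : relPow R (x.layer + j) r (e (e.symm (u j))) := by
    rw [e.apply_symm_apply]
    exact relPow_add_s6 (hu0 ▸ x.reach) (relPow_of_path u j fun i hi => hu i (by omega))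
  let w (j : ℕ) : LayeredWorld e R r :=
    if hj : j < n then ⟨x.layer + j, e.symm (u j), reach j hj.le⟩ else z
  have hw_lt {j : ℕ} (hj : j < n) : w j = ⟨x.layer + j, e.symm (u j), reach j hj.le⟩ := dif_pos hj
  have hw_proj {j : ℕ} (hj : j ≤ n) : (w j).proj = u j := by
    rcases hj.lt_or_eq with hj | rfl
    · simp [hw_lt hj, proj]
    · simp [w, hun]
  have hw_layer {j : ℕ} (hj : j ≤ n) : (w j).layer ≤ x.layer + j := by
    rcases hj.lt_or_eq with hj | rfl
    · simp [hw_lt hj]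
    · simpa [w] using hz
  refine ⟨w, ?_, by simp [w], fun j hj => ⟨?_, ?_⟩, fun j _ hj => by simp [hw_lt hj]⟩
  · ext
    · simp [hw_lt hn]
    · simp [hw_lt hn, hu0, proj]
  · rw [hw_proj hj.le, hw_proj hj]
    exact hu j hj
  · have := hw_layer (Nat.succ_le_of_lt hj)
    rw [hw_lt hj]
    omega

end LayeredWorld

open LayeredWorld in
theorem statement6_general (Φ : Set (ℕ × ℕ)) (hΦ : ∀ mn ∈ Φ, 1 < mn.1 ∧ mn.1 < mn.2)
    {W : Type*} [Countable W]
    (R : W → W → Prop) (r : W) (hFrame : PhiFrame R Φ) :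
    ∃ (W' : Type) (R' : W' → W' → Prop) (r' : W') (f : W' → W),
      Rooted R' r' ∧ IsPMorphism R' r' R r f ∧
      (∀ x y, R' x y → ∃ y', R' x y' ∧ depth R' r' y' = depth R' r' x + 1 ∧ f y' = f y) ∧
      (∀ mn ∈ Φ, ∀ x z, relPow R' mn.1 x z → DepthPath R' (depth R' r') mn.2 x z) := by
  let e : Shrink.{0} W ≃ W := (equivShrink.{0} W).symm
  refine ⟨LayeredWorld e R r, Edge, root e R r, proj, rooted, isPMorphism, ?_, ?_⟩
  · intro x y hxy
    refine ⟨x.succ y.proj hxy.1, x.edge_succ _ hxy.1, ?_, proj_succ ..⟩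
    simp only [depth_eq_layer, layer_succ]
  · intro mn hmn x z hxz
    have hmn_lt := (hΦ mn hmn).2
    have hz : z.layer ≤ x.layer + mn.1 := le_add_of_relPow (fun _ _ hab => hab.2) hxz
    have hR : relPow R mn.2 x.proj z.proj :=
      hFrame mn hmn _ _ (relPow_map (fun _ _ hab => hab.1) hxz)
    rw [show depth Edge (root e R r) = layer from funext depth_eq_layer]
    exact depthPath_layer (by omega) hR (by omega)

/-- For any countable rooted `Φ`-frame (`Φ` countable) there is a rooted pointed frame
and a pointed p-morphism onto it satisfying conditions (i) and (ii). -/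
theorem statement6 (Φ : Set (ℕ × ℕ)) (hΦ : ∀ mn ∈ Φ, 1 < mn.1 ∧ mn.1 < mn.2)
    (hΦc : Φ.Countable) {W : Type*} [Countable W]
    (R : W → W → Prop) (r : W) (hFrame : PhiFrame R Φ) (hRoot : Rooted R r) :
    ∃ (W' : Type) (R' : W' → W' → Prop) (r' : W') (f : W' → W),
      Rooted R' r' ∧ IsPMorphism R' r' R r f ∧
      (∀ x y, R' x y → ∃ y', R' x y' ∧ depth R' r' y' = depth R' r' x + 1 ∧ f y' = f y) ∧
      (∀ mn ∈ Φ, ∀ x z, relPow R' mn.1 x z → DepthPath R' (depth R' r') mn.2 x z) :=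
  statement6_general Φ hΦ R r hFrame
end

section
/- Let Φ be a set of pairs (m,n) with n > m > 1, and let (W,R,V) be a model rooted at r satisfying condition (1): ∀x,y (x R y → ∃y' (x R y' ∧ d_r(y') = d_r(x)+1 ∧ y' ∼ y)), where ∼ is bisimilarity within (W,R,V), and condition (2): for each (m,n) ∈ Φ, ∀x,z (x R^m z → ∃ w_1,…,w_{n−1} with x R w_1 R ⋯ R w_{n−1} R z and d_r(w_j) = d_r(x)+j for each j). Let X be a finite set of propositional variables and k a natural number. Let W^f be the set of ≡-classes of W_{≤k} := {x : d_r(x) ≤ k}, where x ≡ y iff d_r(x) = d_r(y) and x ∼_{k−d_r(x)}^X y, and let |x| R^f |y| iff d_r(x) = k, or (d_r(x) < k and d_r(y) ≤ d_r(x)+1 and ∃y' with x R y' and y' ∼_{k−d_r(x)−1}^X y). Then (W^f, R^f) is a finite Φ-frame: W^f is finite and for every (m,n) ∈ Φ and all a,c ∈ W^f, a (R^f)^m c implies a (R^f)^n c. -/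
/-- The domain of the filtration: worlds of depth at most `k`. -/
def DepthLE (W : Type*) (R : W → W → Prop) (r : W) (k : ℕ) := {w : W // depth R r w ≤ k}

/-- The filtration equivalence `x ≡ y iff d(x) = d(y) and x ∼_{k-d(x)} y`. -/
def FilEquiv {W : Type*} (R : W → W → Prop) (V : ℕ → Set W) (r : W) (X : Set ℕ) (k : ℕ)
    (x y : DepthLE W R r k) : Prop :=
  depth R r x.1 = depth R r y.1 ∧ kBisim R V R V X (k - depth R r x.1) x.1 y.1

/-- The condition `C(x,y)`: `d(x) = k`, or `d(x) < k`, `d(y) ≤ d(x)+1`, and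
there is `y'` with `x R y'` and `y' ∼_{k-d(x)-1} y`. -/
def FilC {W : Type*} (R : W → W → Prop) (V : ℕ → Set W) (r : W) (X : Set ℕ) (k : ℕ)
    (x y : W) : Prop :=
  depth R r x = k ∨ (depth R r x < k ∧ depth R r y ≤ depth R r x + 1 ∧
    ∃ y', R x y' ∧ kBisim R V R V X (k - depth R r x - 1) y' y)

/-- The filtrated relation `R^f` on equivalence classes: `|x| R^f |y|` iff `C(x,y)`. -/
def FilRel {W : Type*} (R : W → W → Prop) (V : ℕ → Set W) (r : W) (X : Set ℕ) (k : ℕ)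
    (a c : Quot (FilEquiv R V r X k)) : Prop :=
  ∃ x z : DepthLE W R r k, a = Quot.mk _ x ∧ c = Quot.mk _ z ∧ FilC R V r X k x.1 z.1

/-- The filtrated valuation `V^f(p) = {|x| : x ∈ V(p)}`. -/
def FilVal {W : Type*} (R : W → W → Prop) (V : ℕ → Set W) (r : W) (X : Set ℕ) (k : ℕ)
    (p : ℕ) : Set (Quot (FilEquiv R V r X k)) :=
  {a | ∃ x : DepthLE W R r k, a = Quot.mk _ x ∧ x.1 ∈ V p}

section KB

variable {W : Type*} {R : W → W → Prop} {V : ℕ → Set W} {X : Set ℕ}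

lemma kBisim_refl : ∀ (n : ℕ) (w : W), kBisim R V R V X n w w := by
  intro n
  induction n with
  | zero => intro w; simp [kBisim]
  | succ n ih =>
    intro w
    exact ⟨fun p _ => Iff.rfl, fun v hv => ⟨v, hv, ih v⟩, fun v hv => ⟨v, hv, ih v⟩⟩

lemma kBisim_symm : ∀ (n : ℕ) (w w' : W),
    kBisim R V R V X n w w' → kBisim R V R V X n w' w := by
  intro n
  induction n with
  | zero => intro w w' h p hp; exact (h p hp).symm
  | succ n ih =>
    rintro w w' ⟨h0, hf, hb⟩
    refine ⟨fun p hp => (h0 p hp).symm, ?_, ?_⟩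
    · intro v hv
      obtain ⟨v', hv', hk⟩ := hb v hv
      exact ⟨v', hv', ih _ _ hk⟩
    · intro v' hv'
      obtain ⟨v, hv, hk⟩ := hf v' hv'
      exact ⟨v, hv, ih _ _ hk⟩

lemma kBisim_trans : ∀ (n : ℕ) (w1 w2 w3 : W), kBisim R V R V X n w1 w2 →
    kBisim R V R V X n w2 w3 → kBisim R V R V X n w1 w3 := by
  intro n
  induction n with
  | zero => intro w1 w2 w3 h h' p hp; exact (h p hp).trans (h' p hp)
  | succ n ih =>
    rintro w1 w2 w3 ⟨h0, hf, hb⟩ ⟨h0', hf', hb'⟩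
    refine ⟨fun p hp => (h0 p hp).trans (h0' p hp), ?_, ?_⟩
    · intro v hv
      obtain ⟨v', hv', hk⟩ := hf v hv
      obtain ⟨v'', hv'', hk'⟩ := hf' v' hv'
      exact ⟨v'', hv'', ih _ _ _ hk hk'⟩
    · intro v hv
      obtain ⟨v', hv', hk⟩ := hb' v hv
      obtain ⟨v'', hv'', hk'⟩ := hb v' hv'
      exact ⟨v'', hv'', ih _ _ _ hk' hk⟩

lemma kBisim_down : ∀ (n : ℕ) (w w' : W),
    kBisim R V R V X (n + 1) w w' → kBisim R V R V X n w w' := by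
  intro n
  induction n with
  | zero => rintro w w' ⟨h0, _, _⟩; exact h0
  | succ n ih =>
    rintro w w' ⟨h0, hf, hb⟩
    refine ⟨h0, ?_, ?_⟩
    · intro v hv
      obtain ⟨v', hv', hk⟩ := hf v hv
      exact ⟨v', hv', ih _ _ hk⟩
    · intro v' hv'
      obtain ⟨v, hv, hk⟩ := hb v' hv'
      exact ⟨v, hv, ih _ _ hk⟩

lemma kBisim_mono {n n' : ℕ} (h : n' ≤ n) {w w' : W}
    (hk : kBisim R V R V X n w w') : kBisim R V R V X n' w w' := by
  induction n with
  | zero => rwa [Nat.le_zero.mp h]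
  | succ n ih =>
    rcases Nat.lt_succ_iff_lt_or_eq.mp (Nat.lt_succ_of_le h) with h' | h'
    · exact ih (Nat.lt_succ_iff.mp h') (kBisim_down _ _ _ hk)
    · rwa [h']

lemma Bisim.toKBisim {x y : W} (h : Bisim R V R V x y) (n : ℕ) :
    kBisim R V R V X n x y := by
  obtain ⟨Z, hZ, hprop⟩ := h
  have key : ∀ (n : ℕ) (w w' : W), Z w w' → kBisim R V R V X n w w' := by
    intro n
    induction n with
    | zero => intro w w' hww; exact fun p _ => (hprop w w' hww).1 p
    | succ n ih =>
      intro w w' hww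
      obtain ⟨h0, hf, hb⟩ := hprop w w' hww
      refine ⟨fun p _ => h0 p, ?_, ?_⟩
      · intro v hv
        obtain ⟨v', hv', hz⟩ := hf v hv
        exact ⟨v', hv', ih _ _ hz⟩
      · intro v' hv'
        obtain ⟨v, hv, hz⟩ := hb v' hv'
        exact ⟨v, hv, ih _ _ hz⟩
  exact key n x y hZ

end KB

section Fin1

/-- Types for `n`-bisimulation w.r.t. variable set `X`. -/
def Typ (X : Set ℕ) : ℕ → Type
  | 0 => X → Prop
  | n+1 => (X → Prop) × Set (Typ X n)

lemma typ_finite {X : Set ℕ} (hX : X.Finite) : ∀ n, Finite (Typ X n) := by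
  have := hX.to_subtype
  intro n
  induction n with
  | zero => exact inferInstanceAs (Finite (X → Prop))
  | succ n ih => exact inferInstanceAs (Finite ((X → Prop) × Set (Typ X n)))

/-- The `n`-bisimulation type of a world. -/
def typ {W : Type*} (R : W → W → Prop) (V : ℕ → Set W) (X : Set ℕ) :
    (n : ℕ) → W → Typ X n
  | 0, w => fun p => w ∈ V p.1
  | n+1, w => ((fun p => w ∈ V p.1, {t | ∃ v, R w v ∧ typ R V X n v = t}) :
      (X → Prop) × Set (Typ X n))

lemma typ_eq_iff {W : Type*} (R : W → W → Prop) (V : ℕ → Set W) (X : Set ℕ) :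
    ∀ (n : ℕ) (w w' : W), typ R V X n w = typ R V X n w' ↔ kBisim R V R V X n w w' := by
  intro n
  induction n with
  | zero =>
    intro w w'
    constructor
    · intro h p hp
      exact iff_of_eq (congrFun h ⟨p, hp⟩)
    · intro h
      funext p
      exact propext (h p.1 p.2)
  | succ n ih =>
    intro w w'
    constructor
    · intro h
      have h' : ((fun p => w ∈ V p.1, {t | ∃ v, R w v ∧ typ R V X n v = t}) :
          (X → Prop) × Set (Typ X n)) =
          (fun p => w' ∈ V p.1, {t | ∃ v, R w' v ∧ typ R V X n v = t}) := h
      rw [Prod.mk.injEq] at h'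
      obtain ⟨h1, h2⟩ := h'
      refine ⟨fun p hp => iff_of_eq (congrFun h1 ⟨p, hp⟩), ?_, ?_⟩
      · intro v hv
        have hmem : typ R V X n v ∈ {t | ∃ v', R w' v' ∧ typ R V X n v' = t} := by
          rw [← h2]; exact ⟨v, hv, rfl⟩
        obtain ⟨v', hv', heq⟩ := hmem
        exact ⟨v', hv', (ih v v').mp heq.symm⟩
      · intro v' hv'
        have hmem : typ R V X n v' ∈ {t | ∃ v, R w v ∧ typ R V X n v = t} := by
          rw [h2]; exact ⟨v', hv', rfl⟩
        obtain ⟨v, hv, heq⟩ := hmem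
        exact ⟨v, hv, (ih v v').mp heq⟩
    · rintro ⟨h0, hf, hb⟩
      show ((fun p => w ∈ V p.1, {t | ∃ v, R w v ∧ typ R V X n v = t}) :
          (X → Prop) × Set (Typ X n)) =
          (fun p => w' ∈ V p.1, {t | ∃ v, R w' v ∧ typ R V X n v = t})
      rw [Prod.mk.injEq]
      constructor
      · funext p; exact propext (h0 p.1 p.2)
      · ext t
        constructor
        · rintro ⟨v, hv, rfl⟩
          obtain ⟨v', hv', hk⟩ := hf v hv
          exact ⟨v', hv', ((ih v v').mpr hk).symm⟩
        · rintro ⟨v', hv', rfl⟩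
          obtain ⟨v, hv, hk⟩ := hb v' hv'
          exact ⟨v, hv, (ih v v').mpr hk⟩

lemma heq_typ {W : Type*} (R : W → W → Prop) (V : ℕ → Set W) (X : Set ℕ)
    {n n' : ℕ} (h : n = n') (x y : W) (ht : typ R V X n x = typ R V X n y) :
    HEq (typ R V X n x) (typ R V X n' y) := by
  subst h; exact heq_of_eq ht

lemma eq_of_heq_typ {W : Type*} (R : W → W → Prop) (V : ℕ → Set W) (X : Set ℕ)
    {n n' : ℕ} (h : n = n') (x y : W) (ht : HEq (typ R V X n x) (typ R V X n' y)) :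
    typ R V X n x = typ R V X n y := by
  subst h; exact eq_of_heq ht

lemma sigma_helper {X : Set ℕ} {k : ℕ} {n n' : ℕ} (hn : n < k+1) (hn' : n' < k+1)
    (t : Typ X n) (t' : Typ X n') (h : n = n') (ht : HEq t t') :
    (⟨⟨n, hn⟩, t⟩ : Σ i : Fin (k+1), Typ X i.1) = ⟨⟨n', hn'⟩, t'⟩ := by
  subst h; rw [eq_of_heq ht]

/-- The invariant map from the filtration domain into a finite type. -/
noncomputable def typMap {W : Type*} (R : W → W → Prop) (V : ℕ → Set W) (r : W)
    (X : Set ℕ) (k : ℕ) (x : DepthLE W R r k) :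
    Fin (k+1) × Σ n : Fin (k+1), Typ X n.1 :=
  ⟨⟨depth R r x.1, Nat.lt_succ_of_le x.2⟩,
   ⟨⟨k - depth R r x.1, Nat.lt_succ_of_le (Nat.sub_le _ _)⟩,
    typ R V X (k - depth R r x.1) x.1⟩⟩

lemma quot_finite {W : Type*} (R : W → W → Prop) (V : ℕ → Set W) (r : W)
    (X : Set ℕ) (hX : X.Finite) (k : ℕ) : Finite (Quot (FilEquiv R V r X k)) := by
  have sound : ∀ x y, FilEquiv R V r X k x y → typMap R V r X k x = typMap R V r X k y := by
    rintro x y ⟨hd, hb⟩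
    have ht : typ R V X (k - depth R r x.1) x.1 = typ R V X (k - depth R r x.1) y.1 :=
      (typ_eq_iff R V X _ _ _).mpr hb
    unfold typMap
    rw [Prod.ext_iff]
    refine ⟨Fin.ext hd, sigma_helper _ _ _ _ (by rw [hd]) (heq_typ R V X (by rw [hd]) _ _ ht)⟩
  set G := Quot.lift (typMap R V r X k) sound with hG
  have hinj : Function.Injective G := by
    intro a b hab
    obtain ⟨x, rfl⟩ := Quot.exists_rep a
    obtain ⟨y, rfl⟩ := Quot.exists_rep b
    have h : typMap R V r X k x = typMap R V r X k y := hab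
    unfold typMap at h
    have h1 := congrArg Prod.fst h
    have h2 := congrArg Prod.snd h
    simp only at h1 h2
    have hd : depth R r x.1 = depth R r y.1 := congrArg Fin.val h1
    obtain ⟨hfst, hsnd⟩ := Sigma.mk.inj_iff.mp h2
    have hnn : k - depth R r x.1 = k - depth R r y.1 := by rw [hd]
    have ht := eq_of_heq_typ R V X hnn _ _ hsnd
    exact Quot.sound ⟨hd, (typ_eq_iff R V X _ _ _).mp ht⟩
  haveI : ∀ n : Fin (k+1), Finite (Typ X n.1) := fun n => typ_finite hX n.1
  exact Finite.of_injective G hinj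

end Fin1

section Paths

variable {α : Type*} {S : α → α → Prop}

lemma relPow_of_seq : ∀ (n : ℕ) (f : ℕ → α), (∀ i < n, S (f i) (f (i+1))) →
    relPow S n (f 0) (f n) := by
  intro n
  induction n with
  | zero => intro f _; rfl
  | succ n ih =>
    intro f hf
    exact ⟨f n, ih f (fun i hi => hf i (Nat.lt_succ_of_lt hi)), hf n (Nat.lt_succ_self n)⟩

lemma relPow_seq : ∀ (n : ℕ) (a c : α), relPow S n a c →
    ∃ f : ℕ → α, f 0 = a ∧ f n = c ∧ ∀ i < n, S (f i) (f (i+1)) := by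
  intro n
  induction n with
  | zero =>
    rintro a c rfl
    exact ⟨fun _ => a, rfl, rfl, fun i hi => absurd hi (Nat.not_lt_zero i)⟩
  | succ n ih =>
    rintro a c ⟨u, hu, hs⟩
    obtain ⟨f, hf0, hfn, hstep⟩ := ih a u hu
    refine ⟨fun i => if i ≤ n then f i else c, by simpa using hf0, by simp, ?_⟩
    intro i hi
    rcases Nat.lt_or_ge i n with h | h
    · simpa [Nat.le_of_lt h, Nat.succ_le_of_lt h] using hstep i h
    · have : i = n := Nat.le_antisymm (Nat.lt_succ_iff.mp hi) h
      subst this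
      simpa [hfn] using hs

lemma relPow_add_s13 {p q : ℕ} {a b c : α} (h1 : relPow S p a b) (h2 : relPow S q b c) :
    relPow S (p + q) a c := by
  induction q generalizing c with
  | zero => exact h2 ▸ h1
  | succ q ih =>
    obtain ⟨u, hu, hs⟩ := h2
    exact ⟨u, ih hu, hs⟩

lemma relPow_self {b : α} (h : S b b) : ∀ q, relPow S q b b := by
  intro q
  induction q with
  | zero => rfl
  | succ q ih => exact ⟨b, ih, h⟩

end Paths

section Depth

variable {W : Type*} {R : W → W → Prop} {r : W}

lemma relPow_depth (hRoot : Rooted R r) (w : W) : relPow R (depth R r w) r w :=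
  Nat.sInf_mem (hRoot w)

lemma depth_le {j : ℕ} {w : W} (h : relPow R j r w) : depth R r w ≤ j :=
  Nat.sInf_le h

lemma depth_succ_le (hRoot : Rooted R r) {x y : W} (h : R x y) :
    depth R r y ≤ depth R r x + 1 :=
  depth_le ⟨x, relPow_depth hRoot x, h⟩

end Depth

section FilLemmas

variable {W : Type*} {R : W → W → Prop} {V : ℕ → Set W} {r : W} {X : Set ℕ} {k : ℕ}

lemma filEquiv_equivalence : Equivalence (FilEquiv R V r X k) := by
  refine ⟨fun x => ⟨rfl, kBisim_refl _ _⟩, ?_, ?_⟩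
  · rintro x y ⟨hd, hb⟩
    exact ⟨hd.symm, hd ▸ kBisim_symm _ _ _ hb⟩
  · rintro x y z ⟨hd, hb⟩ ⟨hd', hb'⟩
    exact ⟨hd.trans hd', kBisim_trans _ _ _ _ hb (hd ▸ hb')⟩

lemma filEquiv_of_quot_eq {x y : DepthLE W R r k}
    (h : Quot.mk (FilEquiv R V r X k) x = Quot.mk (FilEquiv R V r X k) y) :
    FilEquiv R V r X k x y :=
  (filEquiv_equivalence.eqvGen_iff).mp (Quot.eq.mp h)

/-- `FilC` only depends on the equivalence classes. -/
lemma filC_congr {u v x z : DepthLE W R r k} (hux : FilEquiv R V r X k u x)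
    (hvz : FilEquiv R V r X k v z) (h : FilC R V r X k u.1 v.1) :
    FilC R V r X k x.1 z.1 := by
  obtain ⟨hdux, hbux⟩ := hux
  obtain ⟨hdvz, hbvz⟩ := hvz
  rcases h with hk | ⟨hlt, hle, y', hRy', hby'⟩
  · exact Or.inl (hdux ▸ hk)
  · refine Or.inr ⟨hdux ▸ hlt, ?_, ?_⟩
    · omega
    · -- get a successor of x matching y'
      have hpos : k - depth R r u.1 - 1 + 1 = k - depth R r u.1 := by omega
      rw [← hpos] at hbux
      obtain ⟨_, hf, _⟩ := hbux
      obtain ⟨y'', hRy'', hby''⟩ := hf y' hRy'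
      refine ⟨y'', ?_, ?_⟩
      · exact hRy''
      · have h1 : kBisim R V R V X (k - depth R r u.1 - 1) y'' v.1 :=
          kBisim_trans _ _ _ _ (kBisim_symm _ _ _ hby'') hby'
        have h2 : kBisim R V R V X (k - depth R r u.1 - 1) v.1 z.1 :=
          kBisim_mono (by omega) hbvz
        have := kBisim_trans _ _ _ _ h1 h2
        rwa [← hdux]

lemma filRel_elim {a c : Quot (FilEquiv R V r X k)} (x z : DepthLE W R r k)
    (ha : a = Quot.mk _ x) (hc : c = Quot.mk _ z) (h : FilRel R V r X k a c) :
    FilC R V r X k x.1 z.1 := by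
  obtain ⟨u, v, hu, hv, hC⟩ := h
  exact filC_congr (filEquiv_of_quot_eq (hu ▸ ha)) (filEquiv_of_quot_eq (hv ▸ hc)) hC

lemma filRel_of_step (hRoot : Rooted R r) (x y : DepthLE W R r k)
    (hR : R x.1 y.1) (hx : depth R r x.1 < k) :
    FilRel R V r X k (Quot.mk _ x) (Quot.mk _ y) :=
  ⟨x, y, rfl, rfl, Or.inr ⟨hx, depth_succ_le hRoot hR, y.1, hR, kBisim_refl _ _⟩⟩

lemma filRel_of_depth_k (x : DepthLE W R r k) (hx : depth R r x.1 = k)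
    (c : Quot (FilEquiv R V r X k)) : FilRel R V r X k (Quot.mk _ x) c := by
  obtain ⟨z, rfl⟩ := Quot.exists_rep c
  exact ⟨x, z, rfl, rfl, Or.inl hx⟩

end FilLemmas

section Lift

variable {W : Type*} {R : W → W → Prop} {V : ℕ → Set W} {r : W} {X : Set ℕ} {k : ℕ}

lemma lift_path (hRoot : Rooted R r)
    (h1 : ∀ x y, R x y → ∃ y', R x y' ∧ depth R r y' = depth R r x + 1 ∧ Bisim R V R V y' y)
    (x : ℕ → W) :
    ∀ t : ℕ, (∀ i < t, FilC R V r X k (x i) (x (i+1))) →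
    (∀ i < t, depth R r (x i) < k) →
    (∀ i < t, depth R r (x i) ≤ depth R r (x 0) + i) →
    depth R r (x 0) + t ≤ k →
    ∃ z : ℕ → W, z 0 = x 0 ∧ (∀ j < t, R (z j) (z (j+1))) ∧
      (∀ j ≤ t, depth R r (z j) = depth R r (x 0) + j) ∧
      kBisim R V R V X (k - (depth R r (x 0) + t)) (z t) (x t) := by
  intro t
  induction t with
  | zero =>
    intro _ _ _ _
    refine ⟨fun _ => x 0, rfl, fun j hj => absurd hj (Nat.not_lt_zero j), ?_, kBisim_refl _ _⟩
    intro j hj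
    rw [Nat.le_zero.mp hj]
    simp
  | succ t ih =>
    intro hC hdk hdd hk
    obtain ⟨z, hz0, hzstep, hzdep, hzkb⟩ :=
      ih (fun i hi => hC i (by omega)) (fun i hi => hdk i (by omega))
        (fun i hi => hdd i (by omega)) (by omega)
    have hdt : depth R r (x t) ≤ depth R r (x 0) + t := hdd t (by omega)
    rcases hC t (by omega) with hkk | ⟨hlt, hle, y', hRy', hby'⟩
    · exact absurd hkk (ne_of_lt (hdk t (by omega)))
    · have hps : k - (depth R r (x 0) + t) = (k - (depth R r (x 0) + (t+1))) + 1 := by omega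
      rw [hps] at hzkb
      obtain ⟨_, _, hback⟩ := hzkb
      obtain ⟨y3, hRy3, hb3⟩ := hback y' hRy'
      have hb' : kBisim R V R V X (k - (depth R r (x 0) + (t+1))) y' (x (t+1)) :=
        kBisim_mono (by omega) hby'
      obtain ⟨z', hRz', hdz', hbis⟩ := h1 (z t) y3 hRy3
      have hkz' : kBisim R V R V X (k - (depth R r (x 0) + (t+1))) z' (x (t+1)) :=
        kBisim_trans _ _ _ _ (kBisim_trans _ _ _ _ (hbis.toKBisim _) hb3) hb'
      refine ⟨fun j => if j ≤ t then z j else z', by simp [hz0], ?_, ?_, ?_⟩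
      · intro j hj
        rcases Nat.lt_or_ge j t with h | h
        · simpa [Nat.le_of_lt h, Nat.succ_le_of_lt h] using hzstep j h
        · have : j = t := by omega
          subst this
          simpa using hRz'
      · intro j hj
        rcases Nat.lt_or_ge j (t+1) with h | h
        · have hjt : j ≤ t := by omega
          simpa [hjt] using hzdep j hjt
        · have : j = t + 1 := by omega
          subst this
          have : ¬ (t + 1 ≤ t) := by omega
          simp only [this, if_false]
          rw [hdz', hzdep t le_rfl]
          omega
      · have : ¬ (t + 1 ≤ t) := by omega
        simpa [this] using hkz'

lemma real_path_quot (hRoot : Rooted R r) (w : ℕ → W) (t : ℕ)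
    (hstep : ∀ j < t, R (w j) (w (j+1)))
    (hlt : ∀ j < t, depth R r (w j) < k)
    (hle : ∀ j, j ≤ t → depth R r (w j) ≤ k) :
    relPow (FilRel R V r X k) t
      (Quot.mk _ (⟨w 0, hle 0 (Nat.zero_le t)⟩ : DepthLE W R r k))
      (Quot.mk _ (⟨w t, hle t le_rfl⟩ : DepthLE W R r k)) := by
  have emk : ∀ (j j' : ℕ) (hj : j ≤ t) (hj' : j' ≤ t), j = j' →
      (⟨w j, hle j hj⟩ : DepthLE W R r k) = ⟨w j', hle j' hj'⟩ :=
    fun _ _ _ _ h => Subtype.ext (congrArg w h)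
  have hseq := relPow_of_seq (S := FilRel R V r X k) t
    (fun j => Quot.mk _ (⟨w (min j t), hle _ (min_le_right j t)⟩ : DepthLE W R r k)) ?_
  · have e0 := emk (min 0 t) 0 (min_le_right 0 t) (Nat.zero_le t) (Nat.zero_min t)
    have e1 := emk (min t t) t (min_le_right t t) le_rfl (Nat.min_self t)
    rw [e0, e1] at hseq
    exact hseq
  · intro j hj
    have e0 := emk (min j t) j (min_le_right j t) (le_of_lt hj) (min_eq_left (le_of_lt hj))
    have e1 := emk (min (j+1) t) (j+1) (min_le_right (j+1) t) hj (min_eq_left hj)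
    simp only [e0, e1]
    exact filRel_of_step hRoot _ _ (hstep j hj) (hlt j hj)

lemma pad_path (hRoot : Rooted R r) (x0 : DepthLE W R r k) (c : Quot (FilEquiv R V r X k))
    (w : ℕ → W) (t n : ℕ) (hw0 : w 0 = x0.1)
    (hstep : ∀ j < t, R (w j) (w (j+1)))
    (hdep : ∀ j ≤ t, depth R r (w j) = depth R r x0.1 + j)
    (hk : depth R r x0.1 + t = k) (htn : t < n) :
    relPow (FilRel R V r X k) n (Quot.mk _ x0) c := by
  have hle : ∀ j, j ≤ t → depth R r (w j) ≤ k := by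
    intro j hj; rw [hdep j hj]; omega
  have hlt : ∀ j < t, depth R r (w j) < k := by
    intro j hj; rw [hdep j (le_of_lt hj)]; omega
  have hpre := real_path_quot (V := V) (X := X) hRoot w t hstep hlt hle
  have e0 : (⟨w 0, hle 0 (Nat.zero_le t)⟩ : DepthLE W R r k) = x0 := Subtype.ext hw0
  rw [e0] at hpre
  have hdk : depth R r (w t) = k := by rw [hdep t le_rfl]; omega
  have hloop : FilRel R V r X k (Quot.mk _ (⟨w t, hle t le_rfl⟩ : DepthLE W R r k))
      (Quot.mk _ (⟨w t, hle t le_rfl⟩ : DepthLE W R r k)) :=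
    filRel_of_depth_k _ hdk _
  have hlast : FilRel R V r X k (Quot.mk _ (⟨w t, hle t le_rfl⟩ : DepthLE W R r k)) c :=
    filRel_of_depth_k _ hdk c
  have hone : relPow (FilRel R V r X k) 1
      (Quot.mk _ (⟨w t, hle t le_rfl⟩ : DepthLE W R r k)) c := ⟨_, rfl, hlast⟩
  have hcomp := relPow_add_s13 (relPow_add_s13 hpre (relPow_self hloop (n - t - 1))) hone
  have harith : t + (n - t - 1) + 1 = n := by omega
  rwa [harith] at hcomp

end Lift

/-- The filtrated frame `(W^f, R^f)` of a rooted model satisfying conditions (1) and (2)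
is a finite `Φ`-frame. -/
theorem statement13 (Φ : Set (ℕ × ℕ)) (hΦ : ∀ mn ∈ Φ, 1 < mn.1 ∧ mn.1 < mn.2)
    {W : Type*} (R : W → W → Prop) (V : ℕ → Set W) (r : W) (hRoot : Rooted R r)
    (h1 : ∀ x y, R x y → ∃ y', R x y' ∧ depth R r y' = depth R r x + 1 ∧ Bisim R V R V y' y)
    (h2 : ∀ mn ∈ Φ, ∀ x z, relPow R mn.1 x z → DepthPath R (depth R r) mn.2 x z)
    (X : Set ℕ) (hX : X.Finite) (k : ℕ) :
    Finite (Quot (FilEquiv R V r X k)) ∧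
    ∀ mn ∈ Φ, ∀ a c : Quot (FilEquiv R V r X k),
      relPow (FilRel R V r X k) mn.1 a c → relPow (FilRel R V r X k) mn.2 a c := by
  refine ⟨quot_finite R V r X hX k, ?_⟩
  rintro ⟨m, n⟩ hmn a c hpow
  obtain ⟨hm1, hmn'⟩ := hΦ _ hmn
  dsimp only at hm1 hmn' hpow ⊢
  obtain ⟨f, hf0, hfm, hstep⟩ := relPow_seq m a c hpow
  have hrep : ∀ i, ∃ x : DepthLE W R r k, Quot.mk (FilEquiv R V r X k) x = f i :=
    fun i => Quot.exists_rep (f i)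
  choose x hx using hrep
  by_cases hex : ∃ i ≤ m, depth R r (x i).1 = k
  · obtain ⟨i, him, hik⟩ := hex
    have hpre : relPow (FilRel R V r X k) i a (f i) := by
      have := relPow_of_seq (S := FilRel R V r X k) i f (fun j hj => hstep j (by omega))
      rwa [hf0] at this
    have hloop : FilRel R V r X k (f i) (f i) := by
      rw [← hx i]; exact filRel_of_depth_k _ hik _
    have hlast : FilRel R V r X k (f i) c := by
      rw [← hx i]; exact filRel_of_depth_k _ hik c
    have hone : relPow (FilRel R V r X k) 1 (f i) c := ⟨f i, rfl, hlast⟩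
    have hcomp := relPow_add_s13 (relPow_add_s13 hpre (relPow_self hloop (n - i - 1))) hone
    have harith : i + (n - i - 1) + 1 = n := by omega
    rwa [harith] at hcomp
  · push_neg at hex
    have hdk : ∀ i ≤ m, depth R r (x i).1 < k :=
      fun i hi => lt_of_le_of_ne (x i).2 (hex i hi)
    have hC : ∀ i < m, FilC R V r X k (x i).1 (x (i+1)).1 := fun i hi =>
      filRel_elim (x i) (x (i+1)) (hx i).symm (hx (i+1)).symm (hstep i hi)
    have hdd : ∀ i, i ≤ m → depth R r (x i).1 ≤ depth R r (x 0).1 + i := by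
      intro i
      induction i with
      | zero => intro _; simp
      | succ i ih =>
        intro hi
        rcases hC i (by omega) with hkk | ⟨_, hle, _⟩
        · exact absurd hkk (ne_of_lt (hdk i (by omega)))
        · have := ih (by omega); omega
    have ha : a = Quot.mk _ (x 0) := hf0.symm.trans (hx 0).symm
    have hc : c = Quot.mk _ (x m) := hfm.symm.trans (hx m).symm
    have hd0k : depth R r (x 0).1 < k := hdk 0 (by omega)
    by_cases hcase : k ≤ depth R r (x 0).1 + m
    · -- lift k - d0 steps, then pad at depth k
      obtain ⟨z, hz0, hzstep, hzdep, _⟩ := lift_path (X := X) hRoot h1 (fun i => (x i).1)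
        (k - depth R r (x 0).1)
        (fun i hi => hC i (by omega)) (fun i hi => hdk i (by omega))
        (fun i hi => hdd i (by omega))
        (by show depth R r (x 0).1 + (k - depth R r (x 0).1) ≤ k; omega)
      rw [ha]
      exact pad_path hRoot (x 0) c z (k - depth R r (x 0).1) n hz0 hzstep hzdep
        (by omega) (by omega)
    · push_neg at hcase
      obtain ⟨z, hz0, hzstep, hzdep, hzkb⟩ := lift_path (X := X) hRoot h1 (fun i => (x i).1) m
        (fun i hi => hC i hi) (fun i hi => hdk i (by omega)) (fun i hi => hdd i (by omega))
        (by show depth R r (x 0).1 + m ≤ k; omega)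
      have hzkb' : kBisim R V R V X (k - (depth R r (x 0).1 + m)) (z m) (x m).1 := hzkb
      have hrpow : relPow R m (z 0) (z m) := relPow_of_seq m z hzstep
      obtain ⟨w, hw0, hwn, hwstep, hwdep⟩ := h2 (m, n) hmn (z 0) (z m) hrpow
      dsimp only at hwn hwstep hwdep
      have hwd0 : depth R r (w 0) = depth R r (x 0).1 := by rw [hw0, hz0]
      have hwd : ∀ j < n, depth R r (w j) = depth R r (x 0).1 + j := by
        intro j hj
        rcases Nat.eq_zero_or_pos j with h | h
        · subst h; simpa using hwd0
        · rw [hwdep j h hj, hz0]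
      by_cases hck : depth R r (x 0).1 + n ≤ k + 1
      · -- build the full n-path in the quotient
        have hwle : ∀ j, j ≤ n - 1 → depth R r (w j) ≤ k := by
          intro j hj
          rw [hwd j (by omega)]; omega
        have hwlt : ∀ j < n - 1, depth R r (w j) < k := by
          intro j hj
          rw [hwd j (by omega)]; omega
        have hpre := real_path_quot (V := V) (X := X) hRoot w (n-1)
          (fun j hj => hwstep j (by omega)) hwlt hwle
        have e0 : (⟨w 0, hwle 0 (Nat.zero_le _)⟩ : DepthLE W R r k) = x 0 :=
          Subtype.ext (by show w 0 = (x 0).1; rw [hw0, hz0])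
        rw [e0, ← ha] at hpre
        have hdn1 : depth R r (w (n-1)) = depth R r (x 0).1 + (n-1) := hwd (n-1) (by omega)
        have hlast : FilRel R V r X k
            (Quot.mk _ (⟨w (n-1), hwle (n-1) le_rfl⟩ : DepthLE W R r k)) c := by
          refine ⟨_, x m, rfl, hc, ?_⟩
          show FilC R V r X k (w (n-1)) (x m).1
          by_cases hwk : depth R r (w (n-1)) = k
          · exact Or.inl hwk
          · refine Or.inr ⟨lt_of_le_of_ne (hwle (n-1) le_rfl) hwk, ?_, w n, ?_, ?_⟩
            · have h1' := hdd m le_rfl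
              omega
            · have := hwstep (n-1) (by omega)
              rwa [show n - 1 + 1 = n by omega] at this
            · rw [hwn]
              exact kBisim_mono (by omega) hzkb'
        have hone : relPow (FilRel R V r X k) 1
            (Quot.mk _ (⟨w (n-1), hwle (n-1) le_rfl⟩ : DepthLE W R r k)) c := ⟨_, rfl, hlast⟩
        have hcomp := relPow_add_s13 hpre hone
        rwa [show (n-1) + 1 = n by omega] at hcomp
      · -- the n-path reaches depth k: pad there
        push_neg at hck
        rw [ha]
        refine pad_path hRoot (x 0) c w (k - depth R r (x 0).1) n (by rw [hw0, hz0]) ?_ ?_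
          (by omega) (by omega)
        · intro j hj
          exact hwstep j (by omega)
        · intro j hj
          exact hwd j (by omega)
end
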